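/- arXiv:1809.08743 — 5 statements merged into one kernel-verified Lean document; each statement's English description precedes it below -/
import Mathlib

section
/- A square matrix x over a field k is cyclic if and only if the centralizer of x in M_n(k) is commutative. -/
/-- A matrix `x` is cyclic if some vector `v` is such that
`v, x v, …, x^(n-1) v` form a basis of `k^n`. -/
def Matrix.IsCyclic {n : ℕ} {R : Type*} [CommRing R]
    (x : Matrix (Fin n) (Fin n) R) : Prop :=
  ∃ (v : Fin n → R) (b : Module.Basis (Fin n) R (Fin n → R)),
    ∀ i : Fin n, b i = (x ^ (i : ℕ)).mulVec v

/-!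
Make `k^n` a `k[X]`-module `M` with `X` acting as `x`. The centralizer of `x` is then
`End_{k[X]} M`, and `x` is cyclic exactly when `M` is a cyclic `k[X]`-module (by Cayley–Hamilton
the powers `x^i v` with `i < n` already span `k[X] • v`). Endomorphisms of a cyclic module over a
commutative ring commute. Conversely, write `M ≃ ⨁ k[X] ⧸ (pᵢ ^ eᵢ)` with `pᵢ` irreducible. If two
nonzero summands had associated `pᵢ`, multiplication by a suitable power of `pⱼ` would give a
nonzero map between them, which does not commute with the projection onto its source. So the
`pᵢ ^ eᵢ` are pairwise coprime, and by the Chinese remainder theorem `M` is cyclic.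
-/

open Polynomial Module Function
open scoped DirectSum

section CyclicModule

variable {R M N : Type*} [CommRing R] [AddCommGroup M] [Module R M] [AddCommGroup N] [Module R N]

theorem Submodule.IsPrincipal.top_of_surjective (h : (⊤ : Submodule R M).IsPrincipal)
    (f : M →ₗ[R] N) (hf : Surjective f) : (⊤ : Submodule R N).IsPrincipal := by
  simpa [LinearMap.range_eq_top.mpr hf] using h.map f

theorem Module.End.commute_of_top_isPrincipal (hM : (⊤ : Submodule R M).IsPrincipal)
    (g h : Module.End R M) : Commute g h := by
  obtain ⟨v, hv⟩ := hM
  have hgen : ∀ m : M, ∃ r : R, r • v = m := fun m =>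
    Submodule.mem_span_singleton.mp (hv ▸ Submodule.mem_top)
  obtain ⟨a, ha⟩ := hgen (g v)
  obtain ⟨b, hb⟩ := hgen (h v)
  refine LinearMap.ext fun m => ?_
  obtain ⟨r, rfl⟩ := hgen m
  simp only [Module.End.mul_apply, map_smul, ← ha, ← hb, smul_smul, mul_comm a b]

theorem LinearEquiv.commute_of_forall_commute (e : M ≃ₗ[R] N)
    (hM : ∀ g h : Module.End R M, Commute g h) (g h : Module.End R N) : Commute g h := by
  simpa using (hM (e.conjRingEquiv.symm g) (e.conjRingEquiv.symm h)).map e.conjRingEquiv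

theorem DirectSum.linearMap_eq_zero_of_forall_commute {ι : Type*} [DecidableEq ι]
    {β : ι → Type*} [∀ i, AddCommGroup (β i)] [∀ i, Module R (β i)]
    (hcomm : ∀ g h : Module.End R (⨁ i, β i), Commute g h) {i j : ι} (hij : i ≠ j)
    (φ : β i →ₗ[R] β j) : φ = 0 := by
  let π := lof R ι β i ∘ₗ component R ι β i
  let σ := lof R ι β j ∘ₗ φ ∘ₗ component R ι β i
  refine LinearMap.ext fun b => ?_
  -- `π ∘ σ = 0` since `σ` lands in the `j`-th summand, while `σ ∘ π = σ`
  have := congr($((hcomm π σ).eq) (lof R ι β i b))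
  simpa [π, σ, component.of, hij.symm] using congr(component R ι β j $this).symm

theorem DirectSum.top_isPrincipal_of_pairwise_isCoprime {ι : Type*} [Fintype ι]
    {I : ι → Ideal R} (hI : Pairwise (IsCoprime on I)) :
    (⊤ : Submodule R (⨁ i, R ⧸ I i)).IsPrincipal :=
  ((top_isPrincipal.top_of_surjective _ (Ideal.pi_mkQ_surjective hI)).top_of_surjective
    (linearEquivFunOnFintype R ι _).symm.toLinearMap (LinearEquiv.surjective _))

end CyclicModule

section PID

variable {R : Type*} [CommRing R] [IsDomain R]

theorem exists_linearMap_quotient_span_pow_ne_zero {p q : R} (hq : Irreducible q)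
    (hpq : Associated p q) {a b : ℕ} (ha : a ≠ 0) (hb : b ≠ 0) :
    ∃ φ : (R ⧸ R ∙ p ^ a) →ₗ[R] R ⧸ R ∙ q ^ b, φ ≠ 0 := by
  obtain ⟨b, rfl⟩ := Nat.exists_eq_add_one_of_ne_zero hb
  have hmul : R ∙ p ^ a ≤ (R ∙ q ^ (b + 1)).comap (LinearMap.toSpanSingleton R R (q ^ b)) := by
    rw [Submodule.span_singleton_le_iff_mem, Submodule.mem_comap,
      LinearMap.toSpanSingleton_apply, smul_eq_mul, pow_succ']
    exact Ideal.mem_span_singleton.mpr (mul_dvd_mul_right (dvd_pow hpq.symm.dvd ha) _)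
  refine ⟨Submodule.mapQ _ _ _ hmul, fun h => ?_⟩
  have hmem := congr($h (Submodule.Quotient.mk 1))
  rw [Submodule.mapQ_apply, LinearMap.toSpanSingleton_apply, one_smul, LinearMap.zero_apply,
    Submodule.Quotient.mk_eq_zero] at hmem
  have := (pow_dvd_pow_iff hq.ne_zero hq.not_isUnit).mp (Ideal.mem_span_singleton.mp hmem)
  omega

theorem isCoprime_span_pow_of_forall_linearMap_eq_zero [IsBezout R] {p q : R}
    (hp : Irreducible p) (hq : Irreducible q) {a b : ℕ}
    (h : ∀ φ : (R ⧸ R ∙ p ^ a) →ₗ[R] R ⧸ R ∙ q ^ b, φ = 0) :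
    IsCoprime (R ∙ p ^ a) (R ∙ q ^ b) := by
  rw [← Ideal.span, ← Ideal.span, Ideal.isCoprime_span_singleton_iff]
  by_contra hpq
  have ha : a ≠ 0 := by rintro rfl; exact hpq (by rw [pow_zero]; exact isCoprime_one_left)
  have hb : b ≠ 0 := by rintro rfl; exact hpq (by rw [pow_zero]; exact isCoprime_one_right)
  have hdvd : p ∣ q := by
    by_contra hndvd
    exact hpq (hp.coprime_iff_not_dvd.mpr hndvd).pow
  obtain ⟨φ, hφ⟩ :=
    exists_linearMap_quotient_span_pow_ne_zero hq (hp.associated_of_dvd hq hdvd) ha hb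
  exact hφ (h φ)

theorem Module.top_isPrincipal_iff_forall_commute [IsPrincipalIdealRing R] {M : Type*}
    [AddCommGroup M] [Module R M] [Module.Finite R M] (hM : IsTorsion R M) :
    (⊤ : Submodule R M).IsPrincipal ↔ ∀ g h : Module.End R M, Commute g h := by
  refine ⟨End.commute_of_top_isPrincipal, fun hcomm => ?_⟩
  classical
  obtain ⟨ι, _, p, hp, e, ⟨E⟩⟩ := equiv_directSum_of_isTorsion hM
  have hI : Pairwise (IsCoprime on fun i => R ∙ p i ^ e i) := fun i j hij =>
    isCoprime_span_pow_of_forall_linearMap_eq_zero (hp i) (hp j)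
      (DirectSum.linearMap_eq_zero_of_forall_commute (E.commute_of_forall_commute hcomm) hij)
  exact (DirectSum.top_isPrincipal_of_pairwise_isCoprime hI).top_of_surjective E.symm.toLinearMap
    E.symm.surjective

end PID

section AEval

variable {R M : Type*} [CommRing R] [AddCommGroup M] [Module R M] (f : Module.End R M)

theorem Module.AEval'.forall_commute_iff :
    (∀ G H : Module.End R[X] (AEval' f), Commute G H) ↔
      ∀ g h : Module.End R M, Commute f g → Commute f h → Commute g h := by
  let of := AEval'.of f
  constructor
  · intro hcomm g h hg hh
    have lift : ∀ g : Module.End R M, Commute f g →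
        ∃ G : Module.End R[X] (AEval' f), ∀ m, G (of m) = of (g m) := fun g hg =>
      ⟨LinearMap.ofAEval f (of.toLinearMap ∘ₗ g) fun m => by
        simp [of, AEval'.X_smul_of, ← Module.End.mul_apply, hg.eq], fun _ => rfl⟩
    obtain ⟨G, hG⟩ := lift g hg
    obtain ⟨H, hH⟩ := lift h hh
    refine LinearMap.ext fun m => of.injective ?_
    simpa [hG, hH] using congr($((hcomm G H).eq) (of m))
  · intro hcomm G H
    let res (G : Module.End R[X] (AEval' f)) : Module.End R M :=
      of.symm.toLinearMap ∘ₗ G.restrictScalars R ∘ₗ of.toLinearMap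
    have hres : ∀ G, Commute f (res G) := fun G => LinearMap.ext fun m => by
      change f (of.symm (G (of m))) = of.symm (G (of (f m)))
      rw [← AEval'.X_smul_of, map_smul, AEval'.of_symm_X_smul]
    refine LinearMap.ext fun m => of.symm.injective ?_
    simpa [res] using congr($((hcomm _ _ (hres G) (hres H)).eq) (of.symm m))

end AEval

section FiniteDimensional

variable {k V : Type*} [Field k] [AddCommGroup V] [Module k V] [FiniteDimensional k V]

theorem Module.End.aeval_apply_mem_span_pow_apply (f : Module.End k V) (P : k[X]) (v : V) :
    aeval f P v ∈ Submodule.span k (Set.range fun i : Fin (finrank k V) => (f ^ (i : ℕ)) v) := by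
  rw [← aeval_modByMonic_eq_self_of_root f.aeval_self_charpoly]
  rcases (finrank k V).eq_zero_or_pos with h0 | hpos
  · have := Module.finrank_zero_iff.mp h0
    rw [Subsingleton.elim (aeval f _ v) 0]
    exact Submodule.zero_mem _
  have hχ : f.charpoly ≠ 1 := fun h => hpos.ne (by simpa [h] using f.charpoly_natDegree)
  have hdeg : (P %ₘ f.charpoly).natDegree < finrank k V :=
    f.charpoly_natDegree ▸ natDegree_modByMonic_lt P f.charpoly_monic hχ
  rw [aeval_eq_sum_range' hdeg, LinearMap.sum_apply]
  exact Submodule.sum_mem _ fun i hi =>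
    Submodule.smul_mem _ _ (Submodule.subset_span ⟨⟨i, Finset.mem_range.mp hi⟩, rfl⟩)

theorem Module.End.top_isPrincipal_aeval_iff (f : Module.End k V) {n : ℕ}
    (hn : finrank k V = n) :
    (⊤ : Submodule k[X] (AEval' f)).IsPrincipal ↔
      ∃ (v : V) (b : Basis (Fin n) k V), ∀ i, b i = (f ^ (i : ℕ)) v := by
  subst hn
  let of := AEval'.of f
  constructor
  · rintro ⟨w, hw⟩
    have hspan : ⊤ ≤ Submodule.span k (Set.range fun i : Fin (finrank k V) =>
        (f ^ (i : ℕ)) (of.symm w)) := fun u _ => by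
      obtain ⟨P, hP⟩ := Submodule.mem_span_singleton.mp (hw ▸ Submodule.mem_top : of u ∈ _)
      have hu : u = aeval f P (of.symm w) := calc
        u = of.symm (P • w) := by rw [hP, of.symm_apply_apply]
        _ = aeval f P (of.symm w) := AEval.of_symm_smul _ _ _
      exact hu ▸ f.aeval_apply_mem_span_pow_apply P _
    exact ⟨of.symm w, basisOfTopLeSpanOfCardEqFinrank _ hspan (Fintype.card_fin _),
      fun i => by simp⟩
  · rintro ⟨v, b, hb⟩
    refine ⟨of v, (eq_top_iff.mpr fun m _ => ?_).symm⟩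
    have hle : Submodule.span k (Set.range b) ≤
        ((k[X] ∙ of v).restrictScalars k).comap of.toLinearMap :=
      Submodule.span_le.mpr <| by
        rintro _ ⟨i, rfl⟩
        change of (b i) ∈ k[X] ∙ of v
        rw [hb, ← Module.End.smul_def, ← AEval'.X_pow_smul_of]
        exact Submodule.smul_mem _ _ (Submodule.mem_span_singleton_self _)
    simpa using hle (b.span_eq ▸ Submodule.mem_top : of.symm m ∈ _)

theorem Module.End.exists_basis_pow_apply_iff_forall_commute (f : Module.End k V) {n : ℕ}
    (hn : finrank k V = n) :
    (∃ (v : V) (b : Basis (Fin n) k V), ∀ i, b i = (f ^ (i : ℕ)) v) ↔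
      ∀ g h : Module.End k V, Commute f g → Commute f h → Commute g h := by
  rw [← f.top_isPrincipal_aeval_iff hn,
    top_isPrincipal_iff_forall_commute (AEval.isTorsion_of_finiteDimensional k V f),
    AEval'.forall_commute_iff]

end FiniteDimensional

/-- A matrix over a field is cyclic iff its centralizer in `M_n(k)` is
commutative. -/
theorem cyclic_iff_centralizer_commutative {n : ℕ} {k : Type*} [Field k]
    (x : Matrix (Fin n) (Fin n) k) :
    x.IsCyclic ↔
      ∀ y z : Matrix (Fin n) (Fin n) k,
        x * y = y * x → x * z = z * x → y * z = z * y := by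
  let e := Matrix.toLinAlgEquiv' (R := k) (n := Fin n)
  calc x.IsCyclic ↔ ∃ (v : Fin n → k) (b : Basis (Fin n) k (Fin n → k)),
        ∀ i, b i = (e x ^ (i : ℕ)) v := by
        simp [Matrix.IsCyclic, e, ← map_pow, Matrix.toLinAlgEquiv'_apply]
    _ ↔ ∀ g h : Module.End k (Fin n → k), Commute (e x) g → Commute (e x) h → Commute g h :=
        Module.End.exists_basis_pow_apply_iff_forall_commute (e x) (finrank_fin_fun k)
    _ ↔ _ := by
        rw [e.surjective.forall₂]
        simp only [commute_map_iff e.injective, commute_iff_eq]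
end

section
/- Any two a-regular matrices over a commutative local ring R that are conjugate by an element of GL_n(R) are equal; equivalently, for fixed unit a, an a-regular matrix is determined up to equality by its characteristic polynomial, so each similarity class contains at most one a-regular element. -/
/-- An `a`-regular matrix: subdiagonal entries `(a, 1, 1, …, 1)`, arbitrary
last column, zeros elsewhere. -/
def Matrix.IsAReg {n : ℕ} {R : Type*} [CommRing R] (a : R)
    (x : Matrix (Fin n) (Fin n) R) : Prop :=
  ∀ i j : Fin n, (j : ℕ) + 1 < n →
    x i j = if (i : ℕ) = (j : ℕ) + 1 then (if (j : ℕ) = 0 then a else 1) else 0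

/-!
By Cayley–Hamilton, `x ^ n` applied to any vector `v` is the combination of `x ^ i v` (`i < n`)
with coefficients from the characteristic polynomial, which conjugation preserves. For an
`a`-regular `x`, the vectors `x ^ i e₀` (`i < n`) are `e₀, a e₁, …, a e_{n-1}`, the same for
every `a`-regular matrix, so two conjugate ones have the same `x ^ n e₀ = a' • x e_{n-1}`
(`a' = a`, or `1` when `n = 1`), i.e. the same last column; all other columns are fixed by `a`.
-/

open Polynomial Finset

namespace Matrix

variable {ι R : Type*} [Fintype ι] [DecidableEq ι] [CommRing R]

theorem pow_card_mulVec_eq_neg_sum (x : Matrix ι ι R) (v : ι → R) :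
    x ^ Fintype.card ι *ᵥ v =
      -∑ i ∈ range (Fintype.card ι), x.charpoly.coeff i • (x ^ i *ᵥ v) := by
  nontriviality R
  have h := congrArg (· *ᵥ v) (aeval_self_charpoly x)
  rw [x.charpoly_monic.as_sum, charpoly_natDegree_eq_dim] at h
  simp only [map_add, map_sum, map_mul, map_pow, aeval_X, aeval_C, ← Algebra.smul_def,
    add_mulVec, sum_mulVec, smul_mulVec, zero_mulVec] at h
  exact eq_neg_of_add_eq_zero_left h

theorem pow_card_mulVec_eq_of_charpoly_eq {x y : Matrix ι ι R}
    (hxy : x.charpoly = y.charpoly) {v : ι → R}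
    (hv : ∀ i < Fintype.card ι, x ^ i *ᵥ v = y ^ i *ᵥ v) :
    x ^ Fintype.card ι *ᵥ v = y ^ Fintype.card ι *ᵥ v := by
  rw [pow_card_mulVec_eq_neg_sum, pow_card_mulVec_eq_neg_sum, hxy]
  exact congrArg _ (sum_congr rfl fun i hi => by rw [hv i (mem_range.mp hi)])

end Matrix

namespace Matrix.IsAReg

variable {m : ℕ} {R : Type*} [CommRing R] {a : R} {x y : Matrix (Fin (m + 1)) (Fin (m + 1)) R}

theorem mulVec_single_castSucc (hx : x.IsAReg a) (j : Fin m) :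
    x *ᵥ Pi.single j.castSucc 1 = (if (j : ℕ) = 0 then a else 1) • Pi.single j.succ 1 := by
  ext i
  rw [mulVec_single_one, col_apply, hx i j.castSucc (by simp), Pi.smul_apply, Pi.single_apply]
  simp only [Fin.ext_iff, Fin.val_succ, Fin.val_castSucc]
  split_ifs <;> simp

theorem pow_mulVec_single_zero (hx : x.IsAReg a) (i : Fin (m + 1)) :
    x ^ (i : ℕ) *ᵥ Pi.single 0 1 = (if (i : ℕ) = 0 then 1 else a) • Pi.single i 1 := by
  induction i using Fin.induction with
  | zero => rw [Fin.val_zero, pow_zero, one_mulVec, if_pos rfl, one_smul]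
  | succ j ih =>
    rw [Fin.val_castSucc] at ih
    rw [Fin.val_succ, pow_succ', ← mulVec_mulVec, ih, mulVec_smul, hx.mulVec_single_castSucc,
      smul_smul]
    congr 1
    by_cases hj : (j : ℕ) = 0 <;> simp [hj]

theorem pow_succ_mulVec_single_zero (hx : x.IsAReg a) :
    x ^ (m + 1) *ᵥ Pi.single 0 1 = (if m = 0 then 1 else a) • (x *ᵥ Pi.single (Fin.last m) 1) := by
  have h := hx.pow_mulVec_single_zero (Fin.last m)
  rw [Fin.val_last] at h
  rw [pow_succ', ← mulVec_mulVec, h, mulVec_smul]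

theorem eq_of_charpoly_eq (hx : x.IsAReg a) (hy : y.IsAReg a) (ha : IsUnit a)
    (hxy : x.charpoly = y.charpoly) : x = y := by
  have hpow : ∀ i < Fintype.card (Fin (m + 1)), x ^ i *ᵥ Pi.single 0 1 = y ^ i *ᵥ Pi.single 0 1 :=
    fun i hi => by
      rw [Fintype.card_fin] at hi
      exact (hx.pow_mulVec_single_zero ⟨i, hi⟩).trans (hy.pow_mulVec_single_zero ⟨i, hi⟩).symm
  have hlast := pow_card_mulVec_eq_of_charpoly_eq hxy hpow
  rw [Fintype.card_fin, hx.pow_succ_mulVec_single_zero, hy.pow_succ_mulVec_single_zero] at hlast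
  have hunit : IsUnit (if m = 0 then 1 else a) := by split_ifs <;> simp [ha]
  refine ext_of_mulVec_single fun j => ?_
  induction j using Fin.lastCases with
  | last => exact hunit.smul_left_cancel.mp hlast
  | cast j => rw [hx.mulVec_single_castSucc, hy.mulVec_single_castSucc]

end Matrix.IsAReg

theorem aReg_conj_eq_general {n : ℕ} {R : Type*} [CommRing R]
    (a : R) (ha : IsUnit a) (x y : Matrix (Fin n) (Fin n) R)
    (hx : x.IsAReg a) (hy : y.IsAReg a)
    (g : (Matrix (Fin n) (Fin n) R)ˣ)
    (hconj : y = (g : Matrix (Fin n) (Fin n) R) * x * ((g⁻¹ : (Matrix (Fin n) (Fin n) R)ˣ) : Matrix (Fin n) (Fin n) R)) :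
    x = y := by
  obtain _ | m := n
  · exact Subsingleton.elim x y
  · refine hx.eq_of_charpoly_eq hy ha ?_
    rw [hconj, Matrix.charpoly_mul_comm, ← mul_assoc, Units.inv_mul, one_mul]

/-- Over a commutative local ring, two `a`-regular matrices (for the same
unit `a`) that are conjugate by an element of `GL_n(R)` are equal: each
similarity class contains at most one `a`-regular element. -/
theorem aReg_conj_eq {n : ℕ} {R : Type*} [CommRing R] [IsLocalRing R]
    (a : R) (ha : IsUnit a) (x y : Matrix (Fin n) (Fin n) R)
    (hx : x.IsAReg a) (hy : y.IsAReg a)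
    (g : (Matrix (Fin n) (Fin n) R)ˣ)
    (hconj : y = (g : Matrix (Fin n) (Fin n) R) * x * ((g⁻¹ : (Matrix (Fin n) (Fin n) R)ˣ) : Matrix (Fin n) (Fin n) R)) :
    x = y :=
  aReg_conj_eq_general a ha x y hx hy g hconj
end

section
/- Let R = Z/p^r (or more generally o/p^r for a local ring), and let x ∈ M_n(R) be an a-regular matrix for a unit a. Then the only upper triangular unipotent matrix commuting with x is the identity: C_{M_n(R)}(x) ∩ U = {I_n}, where U is the group of upper triangular matrices with 1's on the diagonal. -/
/-!
Write `c_j` for the subdiagonal entry `x (j+1) j` (a unit). For `j + 1 < n`, column `j` of `u * x`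
is column `j + 1` of `u` scaled by `c_j`, while entry `(i, j)` of `x * u` only involves `u (i-1) j`
and `u (n-1) j`, the latter being zero by triangularity. So `xu = ux` gives
`c_j u i (j+1) = c_{i-1} u (i-1) j`, and the strictly upper entries of `u` vanish by induction on
the row `i`.
-/

namespace Matrix.IsAReg

variable {R : Type*} [CommRing R] {n : ℕ} {a : R} {x u : Matrix (Fin n) (Fin n) R}

theorem apply_of_val_eq_succ (hx : x.IsAReg a) {i j : Fin n} (hij : (i : ℕ) = j + 1) :
    x i j = if (j : ℕ) = 0 then a else 1 := by
  rw [hx i j (by omega), if_pos hij]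

theorem apply_of_val_ne_succ (hx : x.IsAReg a) {i j : Fin n} (hj : (j : ℕ) + 1 < n)
    (hij : (i : ℕ) ≠ j + 1) : x i j = 0 := by
  rw [hx i j hj, if_neg hij]

theorem mul_apply_of_val_eq_succ (hx : x.IsAReg a) (u : Matrix (Fin n) (Fin n) R)
    (i : Fin n) {j m : Fin n} (hm : (m : ℕ) = j + 1) :
    (u * x) i j = u i m * if (j : ℕ) = 0 then a else 1 := by
  rw [mul_apply, Finset.sum_eq_single m, hx.apply_of_val_eq_succ hm]
  · intro k _ hk
    rw [hx.apply_of_val_ne_succ (by omega) (fun h => hk (Fin.ext (h.trans hm.symm))), mul_zero]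
  · simp

theorem mul_apply_eq_zero (hx : x.IsAReg a) (hlow : ∀ i j : Fin n, j < i → u i j = 0)
    {i j : Fin n} (hj : (j : ℕ) + 1 < n) (habove : ∀ k : Fin n, k < i → u k j = 0) :
    (x * u) i j = 0 := by
  rw [mul_apply]
  refine Finset.sum_eq_zero fun k _ => ?_
  by_cases hk : (k : ℕ) + 1 < n
  · by_cases hik : (i : ℕ) = k + 1
    · rw [habove k (Fin.lt_def.mpr (by omega)), mul_zero]
    · rw [hx.apply_of_val_ne_succ hk hik, zero_mul]
  · rw [hlow k j (Fin.lt_def.mpr (by omega)), mul_zero]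

theorem apply_eq_zero_of_lt_of_commute (ha : IsUnit a) (hx : x.IsAReg a)
    (hlow : ∀ i j : Fin n, j < i → u i j = 0) (hcomm : x * u = u * x) :
    ∀ i m : Fin n, i < m → u i m = 0 := by
  intro i
  induction i using WellFoundedLT.induction with
  | _ i ih =>
    intro m him
    rw [Fin.lt_def] at him
    obtain ⟨j, hm⟩ : ∃ j : Fin n, (m : ℕ) = j + 1 := ⟨⟨m - 1, by omega⟩, by simp; omega⟩
    have hunit : IsUnit (if (j : ℕ) = 0 then a else 1) := by
      split_ifs
      exacts [ha, isUnit_one]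
    have hentry := congrFun₂ hcomm i j
    rw [hx.mul_apply_of_val_eq_succ u i hm,
      hx.mul_apply_eq_zero hlow (by omega)
        fun k hk => ih k hk j (Fin.lt_def.mpr (by rw [Fin.lt_def] at hk; omega))] at hentry
    exact hunit.mul_left_eq_zero.mp hentry.symm

theorem eq_one_of_commute_of_unipotent (ha : IsUnit a) (hx : x.IsAReg a)
    (hdiag : ∀ i : Fin n, u i i = 1) (hlow : ∀ i j : Fin n, j < i → u i j = 0)
    (hcomm : x * u = u * x) : u = 1 := by
  ext i j
  rcases lt_trichotomy i j with h | rfl | h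
  · rw [hx.apply_eq_zero_of_lt_of_commute ha hlow hcomm i j h, one_apply_ne h.ne]
  · rw [hdiag, one_apply_eq]
  · rw [hlow i j h, one_apply_ne h.ne']

end Matrix.IsAReg

theorem aReg_centralizer_inter_unipotent_general {n p r : ℕ}
    (a : ZMod (p ^ r)) (ha : IsUnit a)
    (x : Matrix (Fin n) (Fin n) (ZMod (p ^ r))) (hx : x.IsAReg a)
    (u : Matrix (Fin n) (Fin n) (ZMod (p ^ r)))
    (hdiag : ∀ i : Fin n, u i i = 1)
    (hlow : ∀ i j : Fin n, j < i → u i j = 0)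
    (hcomm : x * u = u * x) :
    u = 1 :=
  hx.eq_one_of_commute_of_unipotent ha hdiag hlow hcomm

/-- Over `ℤ/p^r`, the only upper triangular unipotent matrix commuting with
an `a`-regular matrix (`a` a unit) is the identity. -/
theorem aReg_centralizer_inter_unipotent {n p r : ℕ} [Fact p.Prime]
    (hr : 1 ≤ r) (a : ZMod (p ^ r)) (ha : IsUnit a)
    (x : Matrix (Fin n) (Fin n) (ZMod (p ^ r))) (hx : x.IsAReg a)
    (u : Matrix (Fin n) (Fin n) (ZMod (p ^ r)))
    (hdiag : ∀ i : Fin n, u i i = 1)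
    (hlow : ∀ i j : Fin n, j < i → u i j = 0)
    (hcomm : x * u = u * x) :
    u = 1 :=
  aReg_centralizer_inter_unipotent_general a ha x hx u hdiag hlow hcomm
end

section
/- Let o_r = o/p^r with residue field of size q, and let x ∈ M_n(o_r) be a cyclic (regular) matrix. Then the centralizer of x in M_n(o_r) equals the o_r-subalgebra generated by x and has cardinality q^{nr}. -/
/-!
If `v, x v, …, x^{n-1} v` is a basis, a matrix `y` commuting with `x` is determined by `y v`:
on the basis, `y (x^j v) = x^j (y v)`. Writing `y v = ∑ cᵢ xⁱ v` shows that `y = ∑ cᵢ xⁱ`, a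
polynomial in `x`, and every `w` arises as `y v`. Hence `y ↦ y v` identifies the centralizer
with `R^n`. Finally `|O/𝔪^r| = q^r`, since each `𝔪^i/𝔪^(i+1)` is a line over the residue field.
-/

namespace Matrix

variable {n : ℕ} {R : Type*} [CommRing R] {x : Matrix (Fin n) (Fin n) R} {v : Fin n → R}
  {b : Module.Basis (Fin n) R (Fin n → R)}

theorem commute_sum_smul_pow (x : Matrix (Fin n) (Fin n) R) (c : Fin n → R) :
    Commute x (∑ i, c i • x ^ (i : ℕ)) :=
  Commute.sum_right _ _ _ fun _ _ => ((Commute.refl x).pow_right _).smul_right _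

theorem sum_repr_smul_pow_mulVec (hb : ∀ i : Fin n, b i = (x ^ (i : ℕ)) *ᵥ v)
    (w : Fin n → R) : (∑ i, b.repr w i • x ^ (i : ℕ)) *ᵥ v = w := by
  simp only [sum_mulVec, smul_mulVec, ← hb]
  exact b.sum_repr w

theorem eq_of_commute_of_mulVec_eq (hb : ∀ i : Fin n, b i = (x ^ (i : ℕ)) *ᵥ v)
    {y z : Matrix (Fin n) (Fin n) R} (hy : Commute x y) (hz : Commute x z)
    (h : y *ᵥ v = z *ᵥ v) : y = z := by
  refine toLin'.injective (b.ext fun j => ?_)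
  rw [toLin'_apply, toLin'_apply, hb, mulVec_mulVec, mulVec_mulVec, ← (hy.pow_left _).eq,
    ← (hz.pow_left _).eq, ← mulVec_mulVec, ← mulVec_mulVec, h]

theorem eq_sum_repr_smul_pow_of_commute (hb : ∀ i : Fin n, b i = (x ^ (i : ℕ)) *ᵥ v)
    {y : Matrix (Fin n) (Fin n) R} (hy : Commute x y) :
    y = ∑ i, b.repr (y *ᵥ v) i • x ^ (i : ℕ) :=
  eq_of_commute_of_mulVec_eq hb hy (commute_sum_smul_pow x _)
    (sum_repr_smul_pow_mulVec hb _).symm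

theorem IsCyclic.setOf_commute_eq_adjoin (hx : x.IsCyclic) :
    {y : Matrix (Fin n) (Fin n) R | x * y = y * x} = Algebra.adjoin R {x} := by
  obtain ⟨v, b, hb⟩ := hx
  ext y
  refine ⟨fun hy => ?_, fun hy => (Algebra.commute_of_mem_adjoin_self hy).eq⟩
  rw [SetLike.mem_coe, eq_sum_repr_smul_pow_of_commute hb hy]
  exact Subalgebra.sum_mem _ fun i _ =>
    Subalgebra.smul_mem _ (pow_mem (Algebra.self_mem_adjoin_singleton R x) _) _

theorem IsCyclic.card_setOf_commute (hx : x.IsCyclic) :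
    Nat.card {y : Matrix (Fin n) (Fin n) R // x * y = y * x} = Nat.card R ^ n := by
  obtain ⟨v, b, hb⟩ := hx
  let evalAt : {y : Matrix (Fin n) (Fin n) R // x * y = y * x} → Fin n → R := fun y => y.1 *ᵥ v
  have injective : evalAt.Injective := fun y z h =>
    Subtype.ext (eq_of_commute_of_mulVec_eq hb y.2 z.2 h)
  have surjective : evalAt.Surjective := fun w =>
    ⟨⟨_, commute_sum_smul_pow x (b.repr w)⟩, sum_repr_smul_pow_mulVec hb w⟩
  rw [Nat.card_congr (Equiv.ofBijective evalAt ⟨injective, surjective⟩), Nat.card_fun,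
    Nat.card_fin]

end Matrix

theorem IsDiscreteValuationRing.card_quotient_maximalIdeal_pow {O : Type*} [CommRing O]
    [IsDomain O] [IsDiscreteValuationRing O] (r : ℕ) :
    Nat.card (O ⧸ IsLocalRing.maximalIdeal O ^ r) =
      Nat.card (IsLocalRing.ResidueField O) ^ r :=
  cardQuot_pow_of_prime (not_a_field O)

theorem centralizer_of_cyclic_card_general {n : ℕ} {O : Type*} [CommRing O]
    [IsDomain O] [IsDiscreteValuationRing O] (r : ℕ)
    (x : Matrix (Fin n) (Fin n) (O ⧸ (IsLocalRing.maximalIdeal O ^ r)))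
    (hx : x.IsCyclic) :
    {y : Matrix (Fin n) (Fin n) (O ⧸ (IsLocalRing.maximalIdeal O ^ r)) |
        x * y = y * x} =
      (Algebra.adjoin (O ⧸ (IsLocalRing.maximalIdeal O ^ r)) {x} :
        Subalgebra (O ⧸ (IsLocalRing.maximalIdeal O ^ r))
          (Matrix (Fin n) (Fin n) (O ⧸ (IsLocalRing.maximalIdeal O ^ r)))) ∧
    Nat.card {y : Matrix (Fin n) (Fin n) (O ⧸ (IsLocalRing.maximalIdeal O ^ r)) //
        x * y = y * x} =
      Nat.card (IsLocalRing.ResidueField O) ^ (n * r) := by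
  refine ⟨hx.setOf_commute_eq_adjoin, ?_⟩
  rw [hx.card_setOf_commute, IsDiscreteValuationRing.card_quotient_maximalIdeal_pow, ← pow_mul,
    mul_comm]

/-- Let `O` be a discrete valuation ring with maximal ideal `𝔪` and residue
field of size `q`, and let `x` be a cyclic matrix over `O/𝔪^r`.  Then the
centralizer of `x` in `M_n(O/𝔪^r)` equals the subalgebra generated by `x`, and
has cardinality `q^(n*r)`. -/
theorem centralizer_of_cyclic_card {n : ℕ} {O : Type*} [CommRing O]
    [IsDomain O] [IsDiscreteValuationRing O]
    [Finite (IsLocalRing.ResidueField O)] (r : ℕ) (hr : 1 ≤ r)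
    (x : Matrix (Fin n) (Fin n) (O ⧸ (IsLocalRing.maximalIdeal O ^ r)))
    (hx : x.IsCyclic) :
    {y : Matrix (Fin n) (Fin n) (O ⧸ (IsLocalRing.maximalIdeal O ^ r)) |
        x * y = y * x} =
      (Algebra.adjoin (O ⧸ (IsLocalRing.maximalIdeal O ^ r)) {x} :
        Subalgebra (O ⧸ (IsLocalRing.maximalIdeal O ^ r))
          (Matrix (Fin n) (Fin n) (O ⧸ (IsLocalRing.maximalIdeal O ^ r)))) ∧
    Nat.card {y : Matrix (Fin n) (Fin n) (O ⧸ (IsLocalRing.maximalIdeal O ^ r)) //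
        x * y = y * x} =
      Nat.card (IsLocalRing.ResidueField O) ^ (n * r) :=
  centralizer_of_cyclic_card_general r x hx
end

section
/- Let G be a finite group, N a normal subgroup, H ≤ N a subgroup, θ a character of H, and suppose Ind_H^G θ is multiplicity free. If ρ is an irreducible representation of G, then the restriction of ρ to N is multiplicity free provided every irreducible constituent δ of ρ|_N satisfies Hom_N(δ, Ind_H^N θ^g) ≠ 0 for some g-conjugate θ^g of θ. In particular (the paper's special case): if Ind_{SL_n}^{GL_n}(Ind_U^{SL_n} θ) is multiplicity free then Ind_U^{SL_n} θ is multiplicity free. -/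
open CategoryTheory

variable {G : Type} [Group G]

/-- The space of the representation of `G` induced from a representation `σ`
of a subgroup `N`: functions `f : G → σ.V` with `f (n * g) = σ n (f g)`. -/
def indSubmodule (N : Subgroup G) (σ : Rep ℂ N) : Submodule ℂ (G → σ.V) where
  carrier := {f | ∀ (n : N) (g : G), f (↑n * g) = σ.ρ n (f g)}
  add_mem' := by
    intro f g hf hg n x
    simp only [Pi.add_apply, hf n x, hg n x, map_add]
  zero_mem' := by intro n g; simp
  smul_mem' := by
    intro c f hf n g
    simp only [Pi.smul_apply, hf n g, map_smul]

/-- The representation of `G` induced from a representation of a subgroup `N`,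
with `G` acting by right translation. -/
noncomputable def indRep (N : Subgroup G) (σ : Rep ℂ N) : Rep ℂ G :=
  Rep.of (X := indSubmodule N σ)
    { toFun := fun g =>
        { toFun := fun f => ⟨fun x => f.1 (x * g), fun n y => by
            show f.1 (↑n * y * g) = _
            rw [mul_assoc]; exact f.2 n (y * g)⟩
          map_add' := fun f₁ f₂ => rfl
          map_smul' := fun c f => rfl }
      map_one' := by ext f x; simp
      map_mul' := by intro g₁ g₂; ext f x; simp [mul_assoc] }

/-- Restriction of a representation of `G` to a subgroup `N`. -/
noncomputable def resRep (N : Subgroup G) (ρ : Rep ℂ G) : Rep ℂ N :=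
  Rep.of (ρ.ρ.comp N.subtype)

/-- The one-dimensional representation attached to a character `θ : H → ℂˣ`. -/
noncomputable def oneDimRep {H : Type} [Group H] (θ : H →* ℂˣ) : Rep ℂ H :=
  Rep.of ((Algebra.lmul ℂ ℂ).toMonoidHom.comp ((Units.coeHom ℂ).comp θ))

/-- A representation is multiplicity free if each irreducible representation
occurs in it with multiplicity at most one. -/
def MultFree (V : Rep ℂ G) : Prop :=
  ∀ W : Rep ℂ G, Simple W → Module.finrank ℂ (W ⟶ V) ≤ 1


/-! Let `W` be an irreducible representation of `N`. Since `N` is finite, `W` is finite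
dimensional, so the coinduced representation `Ind_N^G W` is a nonzero finite-dimensional
representation of `G` and contains an irreducible subrepresentation `V`. By Frobenius reciprocity
the inclusion corresponds to a nonzero, hence surjective, `N`-map `V|_N → W`. Precomposing with
it embeds `Hom_H(W|_H, θ)` into `Hom_H(V|_H, θ)`, and Frobenius reciprocity at both ends gives
`dim Hom_N(W, Ind_H^N θ) ≤ dim Hom_G(V, Ind_H^G θ) ≤ 1`. -/

open CategoryTheory Limits Module

theorem CategoryTheory.finrank_hom_le_of_epi {k C : Type*} [Field k] [Category C]
    [Preadditive C] [Linear k C] {A B : C} (p : A ⟶ B) [Epi p] (X : C)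
    [FiniteDimensional k (A ⟶ X)] : finrank k (B ⟶ X) ≤ finrank k (A ⟶ X) :=
  LinearMap.finrank_le_finrank_of_injective (f := Linear.leftComp k X p)
    fun _ _ h => (cancel_epi p).1 h

namespace Rep

universe u

variable {k G : Type u}

theorem surjective_hom_of_ne_zero [Ring k] [Monoid G] {A B : Rep k G} [Simple B] {f : A ⟶ B}
    (hf : f ≠ 0) : Function.Surjective f.hom :=
  (epi_iff_surjective f).1 (epi_of_nonzero_to_simple hf)

theorem nontrivial_of_not_isZero [Ring k] [Monoid G] {A : Rep k G} (hA : ¬IsZero A) :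
    Nontrivial A :=
  not_subsingleton_iff_nontrivial.1 fun h => hA ((isZero_iff k G A).2 h)

theorem finite_of_simple [CommRing k] [Monoid G] [Finite G] (V : Rep.{u} k G) [Simple V] :
    Module.Finite k V := by
  have := nontrivial_of_not_isZero (Simple.not_isZero V)
  obtain ⟨v, hv⟩ := exists_ne (0 : V)
  exact Module.Finite.of_surjective _ (surjective_hom_of_ne_zero
    ((LinearEquiv.map_ne_zero_iff (leftRegularHomEquiv V).symm).2 hv))

instance finiteDimensional_hom [Field k] [Monoid G] (A B : Rep k G) [FiniteDimensional k A]
    [FiniteDimensional k B] : FiniteDimensional k (A ⟶ B) :=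
  Module.Finite.equiv (homLinearEquiv A B).symm

theorem exists_simple_mono [Field k] [Monoid G] (U : Rep k G) [FiniteDimensional k U]
    (hU : ¬IsZero U) : ∃ (V : Rep k G) (i : V ⟶ U), Simple V ∧ Mono i := by
  induction hn : finrank k U using Nat.strong_induction_on generalizing U with
  | _ n ih =>
    by_cases hs : Simple U
    · exact ⟨U, 𝟙 U, hs, inferInstance⟩
    obtain ⟨Y, f, hf, hiso, hf0⟩ : ∃ (Y : Rep k G) (f : Y ⟶ U), Mono f ∧ ¬IsIso f ∧ f ≠ 0 := by
      by_contra! h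
      refine hs ⟨fun f _ => ⟨fun _ hf0 => hU ?_, not_imp_comm.1 (h _ f inferInstance)⟩⟩
      exact IsZero.of_iso (IsZero.of_mono_eq_zero f hf0) (asIso f).symm
    have hinj : Function.Injective f.hom := (mono_iff_injective f).1 hf
    have : FiniteDimensional k Y := Module.Finite.of_injective f.hom.toLinearMap hinj
    have hlt : finrank k Y < n := by
      have hle := LinearMap.finrank_le_finrank_of_injective (f := f.hom.toLinearMap) hinj
      have hne : finrank k Y ≠ finrank k U := fun heq => hiso <|
        have : Epi f := (epi_iff_surjective f).2
          ((LinearMap.injective_iff_surjective_of_finrank_eq_finrank heq).1 hinj)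
        isIso_of_mono_of_epi f
      omega
    obtain ⟨V, i, hV, hi⟩ := ih _ hlt Y (fun hY => hf0 (hY.eq_of_src _ _)) rfl
    exact ⟨V, i ≫ f, hV, inferInstance⟩

theorem not_isZero_coind [Field k] [Group G] (S : Subgroup G) {A : Rep k S} (hA : ¬IsZero A) :
    ¬IsZero (coind S.subtype A) := by
  classical
  have := nontrivial_of_not_isZero hA
  obtain ⟨a, ha⟩ := exists_ne (0 : A)
  let f : G → A := fun g => if hg : g ∈ S then A.ρ ⟨g, hg⟩ a else 0
  have hf : f ∈ Representation.coindV S.subtype A.ρ := by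
    intro s g
    change f (s * g) = A.ρ s (f g)
    by_cases hg : g ∈ S
    · simp only [f, dif_pos hg, dif_pos (S.mul_mem s.2 hg)]
      rw [← Module.End.mul_apply, ← map_mul]
      rfl
    · simp [f, hg, (S.mul_mem_cancel_left s.2).not.2 hg]
  rw [isZero_iff, not_subsingleton_iff_nontrivial]
  refine nontrivial_of_ne ⟨f, hf⟩ 0 fun h => ha ?_
  have h1 := congrFun (congrArg Subtype.val h) 1
  simp only [f, dif_pos S.one_mem] at h1
  rwa [show (⟨1, S.one_mem⟩ : S) = 1 from rfl, map_one, Module.End.one_apply] at h1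

theorem finrank_res_hom_of_surjective [Field k] {H : Type u} [Monoid G] [Monoid H]
    (φ : H →* G) (hφ : Function.Surjective φ) (A B : Rep.{u} k G) :
    finrank k (res φ A ⟶ res φ B) = finrank k (A ⟶ B) :=
  have := full_res (k := k) φ hφ
  (LinearEquiv.ofBijective ((resFunctor (k := k) φ).mapLinearMap k)
    ⟨(resFunctor φ).map_injective, (resFunctor φ).map_surjective⟩).finrank_eq.symm

end Rep

-- `indRep N σ` is definitionally Mathlib's `Rep.coind N.subtype σ`.
universe w in
theorem finrank_hom_indRep {G : Type} [Group G] (N : Subgroup G) (σ : Rep.{w} ℂ N)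
    (V : Rep.{w} ℂ G) : finrank ℂ (V ⟶ indRep N σ) = finrank ℂ (Rep.res N.subtype V ⟶ σ) :=
  (Rep.resCoindHomEquiv.{w} N.subtype V σ).finrank_eq.symm

instance finiteDimensional_oneDimRep {H : Type} [Group H] (θ : H →* ℂˣ) :
    FiniteDimensional ℂ (oneDimRep θ) :=
  Module.Finite.self ℂ

theorem multFree_inner_ind_of_multFree_ind_general {G : Type} [Group G] [Fintype G]
    (N H : Subgroup G) (hHN : H ≤ N) (θ : H →* ℂˣ)
    (hmf : MultFree (indRep H (oneDimRep θ))) :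
    MultFree (indRep (H.subgroupOf N)
      (oneDimRep (θ.comp (Subgroup.subgroupOfEquivOfLe hHN).toMonoidHom))) := by
  set e := (Subgroup.subgroupOfEquivOfLe hHN).toMonoidHom
  intro W hW
  have := Rep.finite_of_simple W
  obtain ⟨V, i, hV, hi⟩ :=
    Rep.exists_simple_mono _ (Rep.not_isZero_coind N (Simple.not_isZero W))
  have := Rep.finite_of_simple V
  have hi0 : i ≠ 0 := fun h => Simple.not_isZero V (IsZero.of_mono_eq_zero i h)
  let p := (Rep.resCoindHomEquiv.{0} N.subtype V W).symm i
  have hp : Function.Surjective p.hom :=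
    Rep.surjective_hom_of_ne_zero ((LinearEquiv.map_ne_zero_iff _).2 hi0)
  have : Epi (Rep.resMap (H.subgroupOf N).subtype p) := (Rep.epi_iff_surjective _).2 hp
  -- restricting to `H.subgroupOf N` through `N` is, definitionally, restricting to `H` along `e`
  calc finrank ℂ (W ⟶ indRep (H.subgroupOf N) (oneDimRep (θ.comp e)))
      = finrank ℂ (Rep.res (H.subgroupOf N).subtype W ⟶ oneDimRep (θ.comp e)) :=
        finrank_hom_indRep _ _ _
    _ ≤ finrank ℂ (Rep.res e (Rep.res H.subtype V) ⟶ Rep.res e (oneDimRep θ)) :=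
        finrank_hom_le_of_epi (Rep.resMap (H.subgroupOf N).subtype p) _
    _ = finrank ℂ (Rep.res H.subtype V ⟶ oneDimRep θ) :=
        Rep.finrank_res_hom_of_surjective e (Subgroup.subgroupOfEquivOfLe hHN).surjective _ _
    _ = finrank ℂ (V ⟶ indRep H (oneDimRep θ)) := (finrank_hom_indRep _ _ _).symm
    _ ≤ 1 := hmf V hV

/-- Let `G` be a finite group, `N ⊴ G`, `H ≤ N` and `θ` a character of `H`.
If `Ind_H^G θ` is multiplicity free then `Ind_H^N θ` is multiplicity free. -/
theorem multFree_inner_ind_of_multFree_ind {G : Type} [Group G] [Fintype G]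
    (N H : Subgroup G) [N.Normal] (hHN : H ≤ N) (θ : H →* ℂˣ)
    (hmf : MultFree (indRep H (oneDimRep θ))) :
    MultFree (indRep (H.subgroupOf N)
      (oneDimRep (θ.comp (Subgroup.subgroupOfEquivOfLe hHN).toMonoidHom))) :=
  multFree_inner_ind_of_multFree_ind_general N H hHN θ hmf
end
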